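/- There exists δ > 0 such that for every symmetric traceless real 3×3 matrix Q̃ with Q̃₁₃ = Q̃₃₁ = Q̃₂₃ = Q̃₃₂ = 0 and |Q̃ − Q⁺| ≤ δ, one has f̃_B(Q̃) − f̃_B(Q⁺) ≤ ⟨g_B(Q̃), Q⁺ − Q̃⟩. -/

import Mathlib

open Matrix

/-- `s₊ = (b + √(b² + 24ac)) / (4c)`. -/
noncomputable def sPlus (a b c : ℝ) : ℝ :=
  (b + Real.sqrt (b ^ 2 + 24 * a * c)) / (4 * c)

/-- `Q⁺ = diag(−s/3, −s/3, 2s/3)`. -/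
noncomputable def Qplus (s : ℝ) : Matrix (Fin 3) (Fin 3) ℝ :=
  Matrix.diagonal ![-s / 3, -s / 3, 2 * s / 3]

/-- The bulk energy density `f̃_B(Q) = −(a/2)tr(Q²) − (b/3)tr(Q³) + (c/4)(tr(Q²))²`. -/
noncomputable def fB (a b c : ℝ) (Q : Matrix (Fin 3) (Fin 3) ℝ) : ℝ :=
  -(a / 2) * (Q * Q).trace - (b / 3) * (Q * Q * Q).trace
    + (c / 4) * ((Q * Q).trace) ^ 2

/-- `g_B(Q) = aQ + b(Q² − (1/3)tr(Q²)·I) − c·Q·tr(Q²)`. -/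
noncomputable def gB (a b c : ℝ) (Q : Matrix (Fin 3) (Fin 3) ℝ) :
    Matrix (Fin 3) (Fin 3) ℝ :=
  a • Q + b • (Q * Q - ((Q * Q).trace / 3) • (1 : Matrix (Fin 3) (Fin 3) ℝ))
    - (c * (Q * Q).trace) • Q

lemma key_abs_le (e δ : ℝ) (h : e^2 ≤ δ^2) (hδ : 0 < δ) : -δ ≤ e ∧ e ≤ δ :=
  ⟨by nlinarith [sq_nonneg (e+δ)], by nlinarith [sq_nonneg (e-δ)]⟩

lemma key_poly (b c s a δ u v z : ℝ) (hb : 0 < b) (hc : 0 < c) (hs : 0 < s)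
    (ha : 0 < a) (hrel : 2*c*s^2 = b*s + 3*a)
    (hd1 : (4*b+8*c*s)*δ ≤ b*s) (hd2 : (2*b+12*c*s)*δ ≤ b*s/2)
    (hu1 : -δ ≤ u) (hu2 : u ≤ δ) (hv1 : -δ ≤ v) (hv2 : v ≤ δ) :
    0 ≤ 3*c*u^4 + 3*c*v^4 + 3*c*z^4 + 6*c*u^3*v + 6*c*u*v^3 + 9*c*u^2*v^2
      + 6*c*u^2*z^2 + 6*c*v^2*z^2 + 6*c*u*v*z^2
      - 4*c*s*u^3 - 4*c*s*v^3 - 8*c*s*u^2*v - 8*c*s*u*v^2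
      - 4*c*s*u*z^2 - 4*c*s*v*z^2
      + 2*b*u^2*v + 2*b*u*v^2 - 2*b*u*z^2 - 2*b*v*z^2
      + 5/3*c*s^2*u^2 + 5/3*c*s^2*v^2 + 8/3*c*s^2*u*v + 2/3*c*s^2*z^2
      - 1/3*b*s*u^2 - 1/3*b*s*v^2 - 4/3*b*s*u*v + 2/3*b*s*z^2
      - a*u^2 - a*v^2 - a*u*v - a*z^2 := by
  have ha' : a = (2*c*s^2 - b*s)/3 := by linarith
  subst ha'
  have hdu : 0 ≤ δ - u := by linarith
  have hdv : 0 ≤ δ - v := by linarith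
  have hdu' : 0 ≤ δ + u := by linarith
  have hdv' : 0 ≤ δ + v := by linarith
  have hcs : 0 ≤ c*s := by positivity
  have hbs : 0 ≤ b*s := by positivity
  have h3a : 0 ≤ 2*c*s^2 - b*s := by nlinarith
  have f1 : 0 ≤ 3*c*(z^2+u^2+u*v+v^2)^2 := by positivity
  have f2 : 0 ≤ (2*c*s^2 - b*s)/2*(u+v)^2 := by positivity
  have f3 : 0 ≤ (2*b+4*c*s)*((δ-u)*z^2) := by positivity
  have f4 : 0 ≤ (2*b+4*c*s)*((δ-v)*z^2) := by positivity
  have f5 : 0 ≤ 4*(c*s)*((δ-u)*u^2) := by positivity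
  have f6 : 0 ≤ 4*(c*s)*((δ-v)*v^2) := by positivity
  have f7 : 0 ≤ 2*b*((δ+v)*u^2) := by positivity
  have f8 : 0 ≤ 2*b*((δ+u)*v^2) := by positivity
  have f9 : 0 ≤ 8*(c*s)*((δ-v)*u^2) := by positivity
  have f10 : 0 ≤ 8*(c*s)*((δ-u)*v^2) := by positivity
  have f11 : 0 ≤ (b*s - (4*b+8*c*s)*δ)*z^2 := by
    have : 0 ≤ b*s - (4*b+8*c*s)*δ := by linarith
    positivity
  have f12 : 0 ≤ (b*s/2 - (2*b+12*c*s)*δ)*u^2 := by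
    have : 0 ≤ b*s/2 - (2*b+12*c*s)*δ := by linarith
    positivity
  have f13 : 0 ≤ (b*s/2 - (2*b+12*c*s)*δ)*v^2 := by
    have : 0 ≤ b*s/2 - (2*b+12*c*s)*δ := by linarith
    positivity
  linarith [f1,f2,f3,f4,f5,f6,f7,f8,f9,f10,f11,f12,f13]

set_option maxHeartbeats 2000000 in
/-- There exists `δ > 0` such that for every symmetric traceless `Q̃` with
`Q̃₁₃ = Q̃₃₁ = Q̃₂₃ = Q̃₃₂ = 0` and `|Q̃ − Q⁺| ≤ δ`, one has
`f̃_B(Q̃) − f̃_B(Q⁺) ≤ ⟨g_B(Q̃), Q⁺ − Q̃⟩`. -/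
theorem fB_taylor_bound (a b c : ℝ) (ha : 0 < a) (hb : 0 < b) (hc : 0 < c) :
    ∃ δ > (0 : ℝ), ∀ Qt : Matrix (Fin 3) (Fin 3) ℝ,
      Qtᵀ = Qt → Qt.trace = 0 →
      Qt 0 2 = 0 → Qt 2 0 = 0 → Qt 1 2 = 0 → Qt 2 1 = 0 →
      Real.sqrt (∑ i, ∑ j, ((Qt - Qplus (sPlus a b c)) i j) ^ 2) ≤ δ →
      fB a b c Qt - fB a b c (Qplus (sPlus a b c))
        ≤ ∑ i, ∑ j, gB a b c Qt i j * (Qplus (sPlus a b c) - Qt) i j := by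
  have hdisc : (0:ℝ) ≤ b^2 + 24*a*c := by positivity
  have hr := Real.sq_sqrt hdisc
  have hrn := Real.sqrt_nonneg (b^2 + 24*a*c)
  set s := sPlus a b c with hs_def
  have hs : 0 < s := by rw [hs_def]; unfold sPlus; positivity
  have hrel : 2*c*s^2 = b*s + 3*a := by
    rw [hs_def]; unfold sPlus; field_simp; nlinarith [hr, Real.sq_sqrt (show (0:ℝ) ≤ b ^ 2 + c * 24 * a by positivity)]
  set δ := b*s/(8*b+48*c*s) with hδ_def
  have h8 : (0:ℝ) < 8*b+48*c*s := by positivity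
  have hδ : 0 < δ := by rw [hδ_def]; positivity
  have hd1 : (4*b+8*c*s)*δ ≤ b*s := by
    rw [hδ_def, ← mul_div_assoc, div_le_iff₀ h8]
    nlinarith [mul_pos hb hs, mul_pos (mul_pos hc hs) (mul_pos hb hs)]
  have hd2 : (2*b+12*c*s)*δ ≤ b*s/2 := by
    rw [hδ_def, ← mul_div_assoc, div_le_div_iff₀ h8 (by norm_num : (0:ℝ) < 2)]
    nlinarith [mul_pos hb hs, mul_pos (mul_pos hc hs) (mul_pos hb hs)]
  refine ⟨δ, hδ, fun Qt hsym htr h02 h20 h12 h21 hnorm => ?_⟩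
  have h10 : Qt 1 0 = Qt 0 1 := by
    have := congrFun (congrFun hsym 0) 1
    simpa [Matrix.transpose_apply] using this
  have h22 : Qt 2 2 = -Qt 0 0 - Qt 1 1 := by
    have := htr
    simp [Matrix.trace, Matrix.diag, Fin.sum_univ_three] at this
    linarith
  -- sum of squares bound
  set Ssum := ∑ i, ∑ j, ((Qt - Qplus s) i j) ^ 2 with hSd
  have hS0 : 0 ≤ Ssum := by positivity
  have hSle : Ssum ≤ δ^2 := by
    have h1 := Real.sq_sqrt hS0
    nlinarith [Real.sqrt_nonneg Ssum]
  have hentry : ∀ i j : Fin 3, ((Qt - Qplus s) i j)^2 ≤ δ^2 := by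
    intro i j
    have h1 : ((Qt - Qplus s) i j)^2 ≤ ∑ k, ((Qt - Qplus s) i k)^2 :=
      Finset.single_le_sum (f := fun k => ((Qt - Qplus s) i k)^2)
        (fun k _ => sq_nonneg _) (Finset.mem_univ j)
    have h2 : (∑ k, ((Qt - Qplus s) i k)^2) ≤ Ssum := by
      rw [hSd]
      exact Finset.single_le_sum (f := fun k => ∑ j, ((Qt - Qplus s) k j)^2)
        (fun k _ => Finset.sum_nonneg fun _ _ => sq_nonneg _) (Finset.mem_univ i)
    linarith
  have e00 : (Qt - Qplus s) 0 0 = Qt 0 0 + s/3 := by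
    simp [Qplus, Matrix.sub_apply, Matrix.diagonal]; ring
  have e11 : (Qt - Qplus s) 1 1 = Qt 1 1 + s/3 := by
    simp [Qplus, Matrix.sub_apply, Matrix.diagonal]; ring
  have hu := key_abs_le _ _ (e00 ▸ hentry 0 0) hδ
  have hv := key_abs_le _ _ (e11 ▸ hentry 1 1) hδ
  have hkey := key_poly b c s a δ (Qt 0 0 + s/3) (Qt 1 1 + s/3) (Qt 0 1)
    hb hc hs ha hrel hd1 hd2 hu.1 hu.2 hv.1 hv.2
  simp [fB, gB, Qplus, Matrix.trace, Matrix.diag, Matrix.mul_apply,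
    Matrix.sub_apply, Matrix.add_apply, Matrix.smul_apply, Matrix.one_apply,
    Matrix.diagonal_apply, Fin.sum_univ_three, smul_eq_mul,
    h02, h20, h12, h21, h10, h22] at hkey ⊢
  ring_nf at hkey ⊢
  linarith [hkey]
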